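/- arXiv:2012.00303 — 2 statements merged into one kernel-verified Lean document; each statement's English description precedes it below -/
import Mathlib

section
/- Let D be a chord diagram and let D' be obtained from D by a weak third move such that exactly one pair of the three distinguished chords crosses in D. Then X(D') = X(D) + 1. (Chord-diagram form of Theorem 2(3): a weak third move changes the cross chord number by exactly 1.) -/
open scoped Classical

/-- Two chords of a chord diagram on the points `0 < 1 < ⋯ < N-1` (in this cyclic
order) cross if their endpoints interleave. -/
def Crosses {N : ℕ} (c d : Sym2 (Fin N)) : Prop :=
  ∃ a b x y : Fin N, a < x ∧ x < b ∧ b < y ∧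
    ((c = s(a, b) ∧ d = s(x, y)) ∨ (c = s(x, y) ∧ d = s(a, b)))

/-- A chord diagram of order `n`: a partition of the `2n` points `0, 1, …, 2n-1`
(in this cyclic order on a circle) into `n` unordered pairs, the chords. -/
structure ChordDiagram (n : ℕ) where
  chords : Finset (Sym2 (Fin (2 * n)))
  not_diag : ∀ c ∈ chords, ¬ c.IsDiag
  cover : ∀ x : Fin (2 * n), ∃! c, c ∈ chords ∧ x ∈ c

/-- The trivializing number: the minimum number of chords whose deletion yields a
trivial chord diagram (one with no two crossing chords). -/
noncomputable def tr {n : ℕ} (D : ChordDiagram n) : ℕ :=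
  sInf {k | ∃ S ⊆ D.chords, S.card = k ∧
    ∀ c ∈ D.chords \ S, ∀ d ∈ D.chords \ S, ¬ Crosses c d}

/-- The cross chord number: the number of unordered pairs of chords that cross. -/
noncomputable def Xnum {n : ℕ} (D : ChordDiagram n) : ℕ :=
  ((D.chords ×ˢ D.chords).filter fun p => Crosses p.1 p.2).card / 2

/-- Two points are cyclically adjacent on the circle `0, 1, …, N-1`. -/
def Adjacent {N : ℕ} (p q : Fin N) : Prop :=
  (p.val + 1) % N = q.val ∨ (q.val + 1) % N = p.val

/-- The ternary cyclic-order relation on the points `0, 1, …, N-1`. -/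
def CyclicBtw {N : ℕ} (a b c : Fin N) : Prop :=
  (a < b ∧ b < c) ∨ (b < c ∧ c < a) ∨ (c < a ∧ a < b)

/-- A first move (first flat Reidemeister move): `D'` is obtained from `D` by
adding an isolated chord. -/
def FirstMove {n : ℕ} (D : ChordDiagram n) (D' : ChordDiagram (n + 1)) : Prop :=
  ∃ ι : Fin (2 * n) → Fin (2 * (n + 1)),
    Function.Injective ι ∧
    (∀ a b c, CyclicBtw a b c → CyclicBtw (ι a) (ι b) (ι c)) ∧
    (∀ ch ∈ D.chords, ch.map ι ∈ D'.chords) ∧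
    ∃ p q : Fin (2 * (n + 1)), Adjacent p q ∧ s(p, q) ∈ D'.chords ∧
      ∀ x, x ∉ Set.range ι ↔ (x = p ∨ x = q)

/-- A triple move with distinguished pairs `A = {a₁, a₂}`, `B = {b₁, b₂}`,
`C = {c₁, c₂}` of cyclically adjacent points and distinguished chords
`s(a₁, b₁)`, `s(a₂, c₁)`, `s(b₂, c₂)`: `D'` is obtained from `D` by transposing
the two points of each of `A`, `B`, `C`. -/
def TripleMoveAt {n : ℕ} (D D' : ChordDiagram n)
    (a₁ a₂ b₁ b₂ c₁ c₂ : Fin (2 * n)) : Prop :=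
  Adjacent a₁ a₂ ∧ Adjacent b₁ b₂ ∧ Adjacent c₁ c₂ ∧
  ([a₁, a₂, b₁, b₂, c₁, c₂].Pairwise (· ≠ ·)) ∧
  s(a₁, b₁) ∈ D.chords ∧ s(a₂, c₁) ∈ D.chords ∧ s(b₂, c₂) ∈ D.chords ∧
  D'.chords = D.chords.image
    (Sym2.map (Equiv.swap a₁ a₂ * Equiv.swap b₁ b₂ * Equiv.swap c₁ c₂))

/-- Three chords pairwise cross. -/
def PairwiseCross {N : ℕ} (x y z : Sym2 (Fin N)) : Prop :=
  Crosses x y ∧ Crosses x z ∧ Crosses y z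

/-- Exactly one of the three pairs among three chords crosses. -/
def ExactlyOneCross {N : ℕ} (x y z : Sym2 (Fin N)) : Prop :=
  (Crosses x y ∧ ¬ Crosses x z ∧ ¬ Crosses y z) ∨
  (¬ Crosses x y ∧ Crosses x z ∧ ¬ Crosses y z) ∨
  (¬ Crosses x y ∧ ¬ Crosses x z ∧ Crosses y z)

/-- A strong third move: a triple move whose three distinguished chords pairwise
cross in `D`, or whose three replacement chords pairwise cross in `D'`. -/
def StrongThirdMove {n : ℕ} (D D' : ChordDiagram n) : Prop :=
  ∃ a₁ a₂ b₁ b₂ c₁ c₂, TripleMoveAt D D' a₁ a₂ b₁ b₂ c₁ c₂ ∧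
    (PairwiseCross s(a₁, b₁) s(a₂, c₁) s(b₂, c₂) ∨
     PairwiseCross s(a₂, b₂) s(a₁, c₂) s(b₁, c₁))

/-- A weak third move: a triple move such that exactly one pair of the three
distinguished chords crosses in `D`, or exactly one pair of the three
replacement chords crosses in `D'`. -/
def WeakThirdMove {n : ℕ} (D D' : ChordDiagram n) : Prop :=
  ∃ a₁ a₂ b₁ b₂ c₁ c₂, TripleMoveAt D D' a₁ a₂ b₁ b₂ c₁ c₂ ∧
    (ExactlyOneCross s(a₁, b₁) s(a₂, c₁) s(b₂, c₂) ∨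
     ExactlyOneCross s(a₂, b₂) s(a₁, c₂) s(b₁, c₁))


/-!
A triple move only transposes cyclically adjacent points. Moving an endpoint of a chord to an
adjacent point that is not an endpoint of a second chord does not change whether the two cross,
so every crossing involving a chord other than the three distinguished ones survives the move.
Transposing the two adjacent endpoints shared by two distinguished chords, on the other hand,
toggles whether they cross. So the three distinguished chords, of which exactly one pair crosses
in `D`, have exactly two crossing pairs in `D'`, and the cross chord number grows by one.
-/

def Interleave (u v x y : ℕ) : Prop :=
  (min u v < min x y ∧ min x y < max u v ∧ max u v < max x y) ∨
  (min x y < min u v ∧ min u v < max x y ∧ max x y < max u v)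

theorem Sym2.mk_min_max {α : Type*} [LinearOrder α] (a b : α) : s(min a b, max a b) = s(a, b) := by
  rcases le_total a b with h | h <;> simp [h, Sym2.eq_swap]

variable {N : ℕ}

theorem crosses_comm {c d : Sym2 (Fin N)} : Crosses c d ↔ Crosses d c := by
  constructor <;> rintro ⟨a, b, x, y, h₁, h₂, h₃, h⟩ <;>
    exact ⟨a, b, x, y, h₁, h₂, h₃, h.symm.imp And.symm And.symm⟩

theorem crosses_mk_iff {u v x y : Fin N} :
    Crosses s(u, v) s(x, y) ↔ Interleave u v x y := by
  constructor
  · rintro ⟨a, b, p, q, h₁, h₂, h₃, ⟨h₄, h₅⟩ | ⟨h₄, h₅⟩⟩ <;>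
      rw [Sym2.eq_iff] at h₄ h₅ <;> simp only [Fin.lt_def] at h₁ h₂ h₃ <;> unfold Interleave <;>
      rcases h₄ with ⟨rfl, rfl⟩ | ⟨rfl, rfl⟩ <;> rcases h₅ with ⟨rfl, rfl⟩ | ⟨rfl, rfl⟩ <;> omega
  · rintro (⟨h₁, h₂, h₃⟩ | ⟨h₁, h₂, h₃⟩)
    · exact ⟨min u v, max u v, min x y, max x y, h₁, h₂, h₃,
        Or.inl ⟨(Sym2.mk_min_max u v).symm, (Sym2.mk_min_max x y).symm⟩⟩
    · exact ⟨min x y, max x y, min u v, max u v, h₁, h₂, h₃,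
        Or.inr ⟨(Sym2.mk_min_max u v).symm, (Sym2.mk_min_max x y).symm⟩⟩

theorem not_crosses_self (c : Sym2 (Fin N)) : ¬ Crosses c c := by
  induction c using Sym2.ind with
  | _ u v => rw [crosses_mk_iff]; unfold Interleave; omega

theorem Adjacent.val_cases {p q : Fin N} (h : Adjacent p q) :
    p.val + 1 = q.val ∨ q.val + 1 = p.val ∨ (p.val + 1 = N ∧ q.val = 0) ∨
      (q.val + 1 = N ∧ p.val = 0) := by
  have hp := p.isLt; have hq := q.isLt
  rcases h with h | h
  · rcases Nat.lt_or_ge (p.val + 1) N with hl | hl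
    · rw [Nat.mod_eq_of_lt hl] at h; omega
    · rw [show p.val + 1 = N by omega, Nat.mod_self] at h; omega
  · rcases Nat.lt_or_ge (q.val + 1) N with hl | hl
    · rw [Nat.mod_eq_of_lt hl] at h; omega
    · rw [show q.val + 1 = N by omega, Nat.mod_self] at h; omega

theorem crosses_mk_left_iff_of_adjacent {p q r : Fin N} {v : Sym2 (Fin N)}
    (hpq : Adjacent p q) (hp : p ∉ v) (hq : q ∉ v) :
    Crosses s(p, r) v ↔ Crosses s(q, r) v := by
  induction v using Sym2.ind with
  | _ x y =>
    simp only [Sym2.mem_iff, not_or, ← Fin.val_inj] at hp hq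
    rw [crosses_mk_iff, crosses_mk_iff]
    have := hpq.val_cases
    have := x.isLt; have := y.isLt; have := r.isLt
    unfold Interleave; omega

theorem crosses_mk_swap_iff_not {p q r s : Fin N} (hpq : Adjacent p q)
    (hr : r ∉ s(p, q)) (hs : s ∉ s(p, q)) (hrs : r ≠ s) :
    Crosses s(q, r) s(p, s) ↔ ¬ Crosses s(p, r) s(q, s) := by
  simp only [Sym2.mem_iff, not_or, ← Fin.val_inj] at hr hs
  rw [crosses_mk_iff, crosses_mk_iff]
  have := hpq.val_cases
  have := p.isLt; have := q.isLt; have := r.isLt; have := s.isLt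
  have := Fin.val_ne_of_ne hrs
  unfold Interleave; omega

section LocalPermutation

variable {σ : Equiv.Perm (Fin N)} (hσ : ∀ x, σ x = x ∨ Adjacent x (σ x))
include hσ

theorem crosses_mk_apply_left_iff {p r : Fin N} {v : Sym2 (Fin N)} (hp : p ∉ v)
    (hσp : σ p ∉ v) : Crosses s(σ p, r) v ↔ Crosses s(p, r) v := by
  rcases hσ p with h | h
  · rw [h]
  · exact (crosses_mk_left_iff_of_adjacent h hp hσp).symm

theorem crosses_map_left_iff {u v : Sym2 (Fin N)} (hv : ∀ x ∈ v, σ x = x)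
    (huv : ∀ x ∈ u, x ∉ v) : Crosses (u.map σ) v ↔ Crosses u v := by
  have hσv : ∀ x ∈ u, σ x ∉ v := fun x hx hσx =>
    huv x hx (σ.injective (hv _ hσx) ▸ hσx)
  induction u using Sym2.ind with
  | _ p r =>
    have hp := Sym2.mem_mk_left p r
    have hr := Sym2.mem_mk_right p r
    rw [Sym2.map_mk, crosses_mk_apply_left_iff hσ (huv p hp) (hσv p hp),
      Sym2.eq_swap, crosses_mk_apply_left_iff hσ (huv r hr) (hσv r hr), Sym2.eq_swap]

theorem crosses_map_map_iff_not {p q r s : Fin N} (hpq : Adjacent p q) (hσp : σ p = q)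
    (hσq : σ q = p) (hr : r ∉ s(p, q)) (hs : s ∉ s(p, q)) (hrs : r ≠ s) (hrσs : r ≠ σ s) :
    Crosses (s(p, r).map σ) (s(q, s).map σ) ↔ ¬ Crosses s(p, r) s(q, s) := by
  simp only [Sym2.mem_iff, not_or] at hr hs
  -- move `σ r` back to `r` and `σ s` back to `s`; only the transposition of `p` and `q` remains
  rw [Sym2.map_mk, Sym2.map_mk, hσp, hσq, Sym2.eq_swap (a := q),
    crosses_mk_apply_left_iff hσ (by simp [hr.1, hrσs]) (by simp [← hσq, hr.2, hrs]),
    Sym2.eq_swap (a := r), crosses_comm, Sym2.eq_swap (a := p),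
    crosses_mk_apply_left_iff hσ (by simp [hs.2, hrs.symm]) (by simp [← hσp, hs.1, hrσs.symm]),
    Sym2.eq_swap, crosses_comm]
  exact crosses_mk_swap_iff_not hpq (by simp [hr.1, hr.2]) (by simp [hs.1, hs.2]) hrs

end LocalPermutation

section Counting

open Finset

noncomputable def crossingPairs (S : Finset (Sym2 (Fin N))) :
    Finset (Sym2 (Fin N) × Sym2 (Fin N)) :=
  (S ×ˢ S).filter fun p => Crosses p.1 p.2

theorem Xnum_eq_card_crossingPairs_div_two {n : ℕ} (D : ChordDiagram n) :
    Xnum D = #(crossingPairs D.chords) / 2 := rfl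

theorem card_crossingPairs_image {f : Sym2 (Fin N) → Sym2 (Fin N)} (hf : f.Injective)
    (S : Finset (Sym2 (Fin N))) :
    #(crossingPairs (S.image f)) = #((S ×ˢ S).filter fun p => Crosses (f p.1) (f p.2)) := by
  rw [crossingPairs, ← prodMap_image_product, filter_image,
    card_image_of_injective _ (hf.prodMap hf)]
  rfl

theorem card_crossingPairs_image_add {f : Sym2 (Fin N) → Sym2 (Fin N)} (hf : f.Injective)
    {S T : Finset (Sym2 (Fin N))} (hTS : T ⊆ S)
    (hf_crosses : ∀ u ∈ S, ∀ v ∈ S, v ∉ T → (Crosses (f u) (f v) ↔ Crosses u v)) :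
    #(crossingPairs (S.image f)) + #(crossingPairs T) =
      #(crossingPairs S) + #(crossingPairs (T.image f)) := by
  have hsplit : ∀ P : Sym2 (Fin N) × Sym2 (Fin N) → Prop,
      #((S ×ˢ S).filter P) = #(((S ×ˢ S) \ (T ×ˢ T)).filter P) + #((T ×ˢ T).filter P) := by
    intro P
    rw [← card_union_of_disjoint (disjoint_filter_filter sdiff_disjoint), ← filter_union,
      sdiff_union_of_subset (product_subset_product hTS hTS)]
  have hoff : ((S ×ˢ S) \ (T ×ˢ T)).filter (fun p => Crosses (f p.1) (f p.2)) =
      ((S ×ˢ S) \ (T ×ˢ T)).filter (fun p => Crosses p.1 p.2) := by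
    refine filter_congr fun ⟨u, v⟩ huv => ?_
    simp only [mem_sdiff, mem_product, not_and_or] at huv
    obtain ⟨⟨hu, hv⟩, huT | hvT⟩ := huv
    · rw [crosses_comm, crosses_comm (c := u)]
      exact hf_crosses v hv u hu huT
    · exact hf_crosses u hu v hv hvT
  rw [card_crossingPairs_image hf, card_crossingPairs_image hf, crossingPairs, crossingPairs,
    hsplit, hsplit (fun p => Crosses p.1 p.2), hoff]
  ring

theorem crossingPairs_eq_filter_offDiag (S : Finset (Sym2 (Fin N))) :
    crossingPairs S = S.offDiag.filter fun p => Crosses p.1 p.2 := by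
  ext ⟨u, v⟩
  simp only [crossingPairs, mem_filter, mem_product, mem_offDiag]
  exact ⟨fun ⟨⟨hu, hv⟩, huv⟩ => ⟨⟨hu, hv, fun e => not_crosses_self u (e ▸ huv)⟩, huv⟩,
    fun ⟨⟨hu, hv, _⟩, huv⟩ => ⟨⟨hu, hv⟩, huv⟩⟩

theorem card_crossingPairs_image_add_of_iff_not {f : Sym2 (Fin N) → Sym2 (Fin N)}
    (hf : f.Injective) {T : Finset (Sym2 (Fin N))}
    (hf_crosses : ∀ u ∈ T, ∀ v ∈ T, u ≠ v → (Crosses (f u) (f v) ↔ ¬ Crosses u v)) :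
    #(crossingPairs (T.image f)) + #(crossingPairs T) = #T.offDiag := by
  have himage : #(crossingPairs (T.image f)) =
      #(T.offDiag.filter fun p => ¬ Crosses p.1 p.2) := by
    rw [card_crossingPairs_image hf]
    congr 1
    ext ⟨u, v⟩
    simp only [mem_filter, mem_product, mem_offDiag]
    constructor
    · rintro ⟨⟨hu, hv⟩, huv⟩
      have hne : u ≠ v := fun e => not_crosses_self (f u) (e ▸ huv)
      exact ⟨⟨hu, hv, hne⟩, (hf_crosses u hu v hv hne).mp huv⟩
    · rintro ⟨⟨hu, hv, hne⟩, huv⟩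
      exact ⟨⟨hu, hv⟩, (hf_crosses u hu v hv hne).mpr huv⟩
  rw [himage, crossingPairs_eq_filter_offDiag, add_comm, card_filter_add_card_filter_not]

theorem card_crossingPairs_of_exactlyOneCross {x y z : Sym2 (Fin N)} (hxy : x ≠ y)
    (hxz : x ≠ z) (hyz : y ≠ z) (h : ExactlyOneCross x y z) :
    #(crossingPairs {x, y, z}) = 2 := by
  rw [crossingPairs, card_filter, sum_product]
  simp only [sum_insert, mem_insert, mem_singleton, hxy, hxz, hyz, or_self, not_false_eq_true,
    sum_singleton, not_crosses_self, if_false, crosses_comm (c := y) (d := x),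
    crosses_comm (c := z) (d := x), crosses_comm (c := z) (d := y)]
  rcases h with ⟨h₁, h₂, h₃⟩ | ⟨h₁, h₂, h₃⟩ | ⟨h₁, h₂, h₃⟩ <;> simp [h₁, h₂, h₃]

end Counting

theorem ChordDiagram.eq_of_mem_of_mem {n : ℕ} (D : ChordDiagram n) {u v : Sym2 (Fin (2 * n))}
    (hu : u ∈ D.chords) (hv : v ∈ D.chords) {x : Fin (2 * n)} (hxu : x ∈ u) (hxv : x ∈ v) :
    u = v :=
  (D.cover x).unique ⟨hu, hxu⟩ ⟨hv, hxv⟩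

section TripleSwap

open Equiv

variable {α : Type*} [DecidableEq α] {a₁ a₂ b₁ b₂ c₁ c₂ : α}

def tripleSwap (a₁ a₂ b₁ b₂ c₁ c₂ : α) : Perm α :=
  swap a₁ a₂ * swap b₁ b₂ * swap c₁ c₂

theorem tripleSwap_apply_of_not_mem {x : α} (hx : x ∉ [a₁, a₂, b₁, b₂, c₁, c₂]) :
    tripleSwap a₁ a₂ b₁ b₂ c₁ c₂ x = x := by
  simp only [List.mem_cons, List.not_mem_nil, or_false, not_or] at hx
  simp [tripleSwap, swap_apply_of_ne_of_ne, hx]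

theorem tripleSwap_apply_of_nodup (hd : [a₁, a₂, b₁, b₂, c₁, c₂].Nodup) :
    let σ := tripleSwap a₁ a₂ b₁ b₂ c₁ c₂
    σ a₁ = a₂ ∧ σ a₂ = a₁ ∧ σ b₁ = b₂ ∧ σ b₂ = b₁ ∧ σ c₁ = c₂ ∧ σ c₂ = c₁ := by
  simp only [List.nodup_cons, List.mem_cons, List.not_mem_nil, or_false, not_or] at hd
  simp [tripleSwap, swap_apply_of_ne_of_ne, hd, Ne.symm]

end TripleSwap

namespace TripleMoveAt

variable {n : ℕ} {D D' : ChordDiagram n} {a₁ a₂ b₁ b₂ c₁ c₂ : Fin (2 * n)}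
  (h : TripleMoveAt D D' a₁ a₂ b₁ b₂ c₁ c₂)
include h

theorem nodup : [a₁, a₂, b₁, b₂, c₁, c₂].Nodup := h.2.2.2.1

theorem chords_eq : D'.chords = D.chords.image (Sym2.map (tripleSwap a₁ a₂ b₁ b₂ c₁ c₂)) :=
  h.2.2.2.2.2.2.2

theorem distinguished_subset :
    {s(a₁, b₁), s(a₂, c₁), s(b₂, c₂)} ⊆ D.chords := by
  simp [Finset.insert_subset_iff, h.2.2.2.2.1, h.2.2.2.2.2.1, h.2.2.2.2.2.2.1]

theorem distinguished_ne :
    s(a₁, b₁) ≠ s(a₂, c₁) ∧ s(a₁, b₁) ≠ s(b₂, c₂) ∧ s(a₂, c₁) ≠ s(b₂, c₂) := by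
  have hd := h.nodup
  simp only [List.nodup_cons, List.mem_cons, List.not_mem_nil, or_false, not_or] at hd
  simp [hd]

theorem tripleSwap_apply_eq_or_adjacent (x : Fin (2 * n)) :
    tripleSwap a₁ a₂ b₁ b₂ c₁ c₂ x = x ∨ Adjacent x (tripleSwap a₁ a₂ b₁ b₂ c₁ c₂ x) := by
  obtain ⟨e₁, e₂, e₃, e₄, e₅, e₆⟩ := tripleSwap_apply_of_nodup h.nodup
  obtain ⟨hA, hB, hC, -⟩ := h
  by_cases hx : x ∈ [a₁, a₂, b₁, b₂, c₁, c₂]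
  · simp only [List.mem_cons, List.not_mem_nil, or_false] at hx
    right
    rcases hx with rfl | rfl | rfl | rfl | rfl | rfl
    · rwa [e₁]
    · rw [e₂]; exact hA.symm
    · rwa [e₃]
    · rw [e₄]; exact hB.symm
    · rwa [e₅]
    · rw [e₆]; exact hC.symm
  · exact Or.inl (tripleSwap_apply_of_not_mem hx)

theorem tripleSwap_apply_of_mem_of_not_mem {v : Sym2 (Fin (2 * n))} (hv : v ∈ D.chords)
    (hvT : v ∉ ({s(a₁, b₁), s(a₂, c₁), s(b₂, c₂)} : Finset _)) :
    ∀ x ∈ v, tripleSwap a₁ a₂ b₁ b₂ c₁ c₂ x = x := by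
  intro x hx
  obtain ⟨-, -, -, -, hab, hac, hbc, -⟩ := h
  refine tripleSwap_apply_of_not_mem fun hx₆ => hvT ?_
  simp only [List.mem_cons, List.not_mem_nil, or_false] at hx₆
  simp only [Finset.mem_insert, Finset.mem_singleton]
  rcases hx₆ with rfl | rfl | rfl | rfl | rfl | rfl
  · exact Or.inl (D.eq_of_mem_of_mem hv hab hx (Sym2.mem_mk_left _ _))
  · exact Or.inr (Or.inl (D.eq_of_mem_of_mem hv hac hx (Sym2.mem_mk_left _ _)))
  · exact Or.inl (D.eq_of_mem_of_mem hv hab hx (Sym2.mem_mk_right _ _))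
  · exact Or.inr (Or.inr (D.eq_of_mem_of_mem hv hbc hx (Sym2.mem_mk_left _ _)))
  · exact Or.inr (Or.inl (D.eq_of_mem_of_mem hv hac hx (Sym2.mem_mk_right _ _)))
  · exact Or.inr (Or.inr (D.eq_of_mem_of_mem hv hbc hx (Sym2.mem_mk_right _ _)))

theorem crosses_map_iff {u v : Sym2 (Fin (2 * n))} (hu : u ∈ D.chords) (hv : v ∈ D.chords)
    (hvT : v ∉ ({s(a₁, b₁), s(a₂, c₁), s(b₂, c₂)} : Finset _)) :
    Crosses (u.map (tripleSwap a₁ a₂ b₁ b₂ c₁ c₂)) (v.map (tripleSwap a₁ a₂ b₁ b₂ c₁ c₂)) ↔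
      Crosses u v := by
  have hfix := h.tripleSwap_apply_of_mem_of_not_mem hv hvT
  have hv_map : v.map (tripleSwap a₁ a₂ b₁ b₂ c₁ c₂) = v := by
    rw [Sym2.map_congr hfix, Sym2.map_id']
    rfl
  rw [hv_map]
  by_cases huv : u = v
  · rw [huv, hv_map]
  · exact crosses_map_left_iff h.tripleSwap_apply_eq_or_adjacent hfix
      fun x hxu hxv => huv (D.eq_of_mem_of_mem hu hv hxu hxv)

theorem crosses_map_iff_not {u v : Sym2 (Fin (2 * n))}
    (hu : u ∈ ({s(a₁, b₁), s(a₂, c₁), s(b₂, c₂)} : Finset _))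
    (hv : v ∈ ({s(a₁, b₁), s(a₂, c₁), s(b₂, c₂)} : Finset _)) (huv : u ≠ v) :
    Crosses (u.map (tripleSwap a₁ a₂ b₁ b₂ c₁ c₂)) (v.map (tripleSwap a₁ a₂ b₁ b₂ c₁ c₂)) ↔
      ¬ Crosses u v := by
  have hσ := h.tripleSwap_apply_eq_or_adjacent
  obtain ⟨e₁, e₂, e₃, e₄, e₅, e₆⟩ := tripleSwap_apply_of_nodup h.nodup
  have hd := h.nodup
  simp only [List.nodup_cons, List.mem_cons, List.not_mem_nil, or_false, not_or] at hd
  obtain ⟨hA, hB, hC, -⟩ := h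
  have hab_ac : Crosses (s(a₁, b₁).map (tripleSwap a₁ a₂ b₁ b₂ c₁ c₂))
      (s(a₂, c₁).map (tripleSwap a₁ a₂ b₁ b₂ c₁ c₂)) ↔ ¬ Crosses s(a₁, b₁) s(a₂, c₁) :=
    crosses_map_map_iff_not hσ hA e₁ e₂ (by simp [hd, eq_comm]) (by simp [hd, eq_comm])
      (by simp [hd]) (by simp [e₅, hd])
  have hab_bc : Crosses (s(a₁, b₁).map (tripleSwap a₁ a₂ b₁ b₂ c₁ c₂))
      (s(b₂, c₂).map (tripleSwap a₁ a₂ b₁ b₂ c₁ c₂)) ↔ ¬ Crosses s(a₁, b₁) s(b₂, c₂) := by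
    rw [Sym2.eq_swap (a := a₁)]
    exact crosses_map_map_iff_not hσ hB e₃ e₄ (by simp [hd]) (by simp [hd, eq_comm])
      (by simp [hd]) (by simp [e₆, hd])
  have hac_bc : Crosses (s(a₂, c₁).map (tripleSwap a₁ a₂ b₁ b₂ c₁ c₂))
      (s(b₂, c₂).map (tripleSwap a₁ a₂ b₁ b₂ c₁ c₂)) ↔ ¬ Crosses s(a₂, c₁) s(b₂, c₂) := by
    rw [Sym2.eq_swap (a := a₂), Sym2.eq_swap (a := b₂)]
    exact crosses_map_map_iff_not hσ hC e₅ e₆ (by simp [hd]) (by simp [hd])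
      (by simp [hd]) (by simp [e₄, hd])
  simp only [Finset.mem_insert, Finset.mem_singleton] at hu hv
  rcases hu with rfl | rfl | rfl <;> rcases hv with rfl | rfl | rfl <;>
    first
    | exact absurd rfl huv
    | assumption
    | exact crosses_comm.trans (hab_ac.trans (not_congr crosses_comm))
    | exact crosses_comm.trans (hab_bc.trans (not_congr crosses_comm))
    | exact crosses_comm.trans (hac_bc.trans (not_congr crosses_comm))

end TripleMoveAt

/-- Theorem 2(3): a weak third move such that exactly one pair
of the three distinguished chords crosses in `D` increases the cross chord
number by exactly `1`. -/
theorem Xnum_eq_add_one_of_weakThirdMove {n : ℕ} (D D' : ChordDiagram n)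
    (h : ∃ a₁ a₂ b₁ b₂ c₁ c₂, TripleMoveAt D D' a₁ a₂ b₁ b₂ c₁ c₂ ∧
      ExactlyOneCross s(a₁, b₁) s(a₂, c₁) s(b₂, c₂)) :
    Xnum D' = Xnum D + 1 := by
  obtain ⟨a₁, a₂, b₁, b₂, c₁, c₂, hmove, hone⟩ := h
  have hinj := Sym2.map.injective (tripleSwap a₁ a₂ b₁ b₂ c₁ c₂).injective
  obtain ⟨hab_ac, hab_bc, hac_bc⟩ := hmove.distinguished_ne
  have hcount := card_crossingPairs_image_add hinj hmove.distinguished_subset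
    fun _ hu _ hv hvT => hmove.crosses_map_iff hu hv hvT
  have hflip := card_crossingPairs_image_add_of_iff_not hinj
    fun _ hu _ hv huv => hmove.crosses_map_iff_not hu hv huv
  have htriple := card_crossingPairs_of_exactlyOneCross hab_ac hab_bc hac_bc hone
  have hoffDiag :
      ({s(a₁, b₁), s(a₂, c₁), s(b₂, c₂)} : Finset (Sym2 (Fin (2 * n)))).offDiag.card = 6 := by
    rw [Finset.offDiag_card, Finset.card_eq_three.mpr ⟨_, _, _, hab_ac, hab_bc, hac_bc, rfl⟩]
  rw [Xnum_eq_card_crossingPairs_div_two, Xnum_eq_card_crossingPairs_div_two, hmove.chords_eq]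
  omega
end

section
/- In any triple move configuration on a chord diagram D with distinguished chords a, b, c, every chord of D other than a, b, c crosses an even number (hence exactly 0 or exactly 2) of the three distinguished chords. (The structural fact about the flat third Reidemeister move configuration used in the proof of the H-invariance lemma.) -/
open scoped Classical

set_option maxHeartbeats 1000000 in
private lemma crosses_iff_aux {N : ℕ} {u v p q : Fin N} (hpq : p ≠ q) (huv : u ≠ v)
    (h1 : u ≠ p) (h2 : u ≠ q) (h3 : v ≠ p) (h4 : v ≠ q) :
    Crosses s(u, v) s(p, q) ↔
      ¬ ((((p : ℕ) < (u : ℕ)) ↔ ((q : ℕ) < (u : ℕ))) ↔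
         (((p : ℕ) < (v : ℕ)) ↔ (((q : ℕ)) < (v : ℕ)))) := by
  have hpq' : (p : ℕ) ≠ q := Fin.val_ne_of_ne hpq
  have huv' : (u : ℕ) ≠ v := Fin.val_ne_of_ne huv
  have h1' : (u : ℕ) ≠ p := Fin.val_ne_of_ne h1
  have h2' : (u : ℕ) ≠ q := Fin.val_ne_of_ne h2
  have h3' : (v : ℕ) ≠ p := Fin.val_ne_of_ne h3
  have h4' : (v : ℕ) ≠ q := Fin.val_ne_of_ne h4
  constructor
  · rintro ⟨a, b, x, y, hax, hxb, hby, (⟨hc, hd⟩ | ⟨hc, hd⟩)⟩ <;>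
      rw [Sym2.eq_iff] at hc hd <;>
      rcases hc with ⟨rfl, rfl⟩ | ⟨rfl, rfl⟩ <;>
      rcases hd with ⟨rfl, rfl⟩ | ⟨rfl, rfl⟩ <;>
      simp only [Fin.lt_def] at hax hxb hby <;> omega
  · intro h
    have hd : (u:ℕ) < p ∧ (p:ℕ) < v ∧ (v:ℕ) < q ∨
        (u:ℕ) < q ∧ (q:ℕ) < v ∧ (v:ℕ) < p ∨
        (v:ℕ) < p ∧ (p:ℕ) < u ∧ (u:ℕ) < q ∨
        (v:ℕ) < q ∧ (q:ℕ) < u ∧ (u:ℕ) < p ∨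
        (p:ℕ) < u ∧ (u:ℕ) < q ∧ (q:ℕ) < v ∨
        (p:ℕ) < v ∧ (v:ℕ) < q ∧ (q:ℕ) < u ∨
        (q:ℕ) < u ∧ (u:ℕ) < p ∧ (p:ℕ) < v ∨
        (q:ℕ) < v ∧ (v:ℕ) < p ∧ (p:ℕ) < u := by
      by_cases A : (p:ℕ) < u <;> by_cases B : (q:ℕ) < u <;>
        by_cases C : (p:ℕ) < v <;> by_cases Dh : (q:ℕ) < v <;>
        simp only [A, B, C, Dh, iff_true, iff_false, true_iff, false_iff,
          not_not, not_true, not_false_iff] at h <;> omega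
    have F : ∀ a b : Fin N, (a:ℕ) < (b:ℕ) → a < b := fun a b hab => Fin.lt_def.mpr hab
    rcases hd with ⟨ha, hb, hc⟩ | ⟨ha, hb, hc⟩ | ⟨ha, hb, hc⟩ | ⟨ha, hb, hc⟩ |
      ⟨ha, hb, hc⟩ | ⟨ha, hb, hc⟩ | ⟨ha, hb, hc⟩ | ⟨ha, hb, hc⟩
    · exact ⟨u, v, p, q, F _ _ ha, F _ _ hb, F _ _ hc, Or.inl ⟨rfl, rfl⟩⟩
    · exact ⟨u, v, q, p, F _ _ ha, F _ _ hb, F _ _ hc, Or.inl ⟨rfl, Sym2.eq_swap⟩⟩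
    · exact ⟨v, u, p, q, F _ _ ha, F _ _ hb, F _ _ hc, Or.inl ⟨Sym2.eq_swap, rfl⟩⟩
    · exact ⟨v, u, q, p, F _ _ ha, F _ _ hb, F _ _ hc, Or.inl ⟨Sym2.eq_swap, Sym2.eq_swap⟩⟩
    · exact ⟨p, q, u, v, F _ _ ha, F _ _ hb, F _ _ hc, Or.inr ⟨rfl, rfl⟩⟩
    · exact ⟨p, q, v, u, F _ _ ha, F _ _ hb, F _ _ hc, Or.inr ⟨Sym2.eq_swap, rfl⟩⟩
    · exact ⟨q, p, u, v, F _ _ ha, F _ _ hb, F _ _ hc, Or.inr ⟨rfl, Sym2.eq_swap⟩⟩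
    · exact ⟨q, p, v, u, F _ _ ha, F _ _ hb, F _ _ hc, Or.inr ⟨Sym2.eq_swap, Sym2.eq_swap⟩⟩

private lemma adj_side_aux {N : ℕ} {p q u v : Fin N} (h : Adjacent p q)
    (h1 : u ≠ p) (h2 : u ≠ q) (h3 : v ≠ p) (h4 : v ≠ q) :
    ((((p:ℕ) < (u:ℕ)) ↔ ((q:ℕ) < (u:ℕ))) ↔ (((p:ℕ) < (v:ℕ)) ↔ ((q:ℕ) < (v:ℕ)))) := by
  have h1' : (u : ℕ) ≠ p := Fin.val_ne_of_ne h1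
  have h2' : (u : ℕ) ≠ q := Fin.val_ne_of_ne h2
  have h3' : (v : ℕ) ≠ p := Fin.val_ne_of_ne h3
  have h4' : (v : ℕ) ≠ q := Fin.val_ne_of_ne h4
  have hp := p.isLt; have hq := q.isLt; have hu := u.isLt; have hv := v.isLt
  have key : ∀ a b : Fin N, ((a:ℕ) + 1) % N = (b:ℕ) →
      ((b:ℕ) = (a:ℕ) + 1 ∨ ((a:ℕ) = N - 1 ∧ (b:ℕ) = 0)) := by
    intro a b hab
    rcases Nat.lt_or_ge ((a:ℕ) + 1) N with hlt | hge
    · left; rw [Nat.mod_eq_of_lt hlt] at hab; omega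
    · right
      have hA := a.isLt
      have : (a:ℕ) + 1 = N := by omega
      rw [this, Nat.mod_self] at hab
      omega
  rcases h with hab | hab <;> rcases key _ _ hab with hc | ⟨hc1, hc2⟩ <;> omega

private lemma boolcore_aux : ∀ p1 p2 p3 p4 p5 p6 q1 q2 q3 q4 q5 q6 : Bool,
    ((p1 == p2) == (q1 == q2)) → ((p3 == p4) == (q3 == q4)) → ((p5 == p6) == (q5 == q6)) →
    ((((p1 == p3) == (q1 == q3)) ∧ ((p2 == p5) == (q2 == q5)) ∧ ((p4 == p6) == (q4 == q6))) ∨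
     (¬((p1 == p3) == (q1 == q3)) ∧ ¬((p2 == p5) == (q2 == q5)) ∧ ((p4 == p6) == (q4 == q6))) ∨
     (¬((p1 == p3) == (q1 == q3)) ∧ ((p2 == p5) == (q2 == q5)) ∧ ¬((p4 == p6) == (q4 == q6))) ∨
     (((p1 == p3) == (q1 == q3)) ∧ ¬((p2 == p5) == (q2 == q5)) ∧ ¬((p4 == p6) == (q4 == q6)))) := by
  decide

private lemma beq_decide_aux (P Q : Prop) [Decidable P] [Decidable Q] :
    (decide P == decide Q) = decide (P ↔ Q) := by
  by_cases h : P <;> by_cases h' : Q <;> simp [h, h']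

private lemma propcore_aux (P1 P2 P3 P4 P5 P6 Q1 Q2 Q3 Q4 Q5 Q6 : Prop)
    [Decidable P1] [Decidable P2] [Decidable P3] [Decidable P4] [Decidable P5]
    [Decidable P6] [Decidable Q1] [Decidable Q2] [Decidable Q3] [Decidable Q4]
    [Decidable Q5] [Decidable Q6]
    (h1 : (P1 ↔ P2) ↔ (Q1 ↔ Q2)) (h2 : (P3 ↔ P4) ↔ (Q3 ↔ Q4))
    (h3 : (P5 ↔ P6) ↔ (Q5 ↔ Q6)) :
    ((¬¬((P1 ↔ P3) ↔ (Q1 ↔ Q3)) ∧ ¬¬((P2 ↔ P5) ↔ (Q2 ↔ Q5)) ∧ ¬¬((P4 ↔ P6) ↔ (Q4 ↔ Q6))) ∨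
     (¬((P1 ↔ P3) ↔ (Q1 ↔ Q3)) ∧ ¬((P2 ↔ P5) ↔ (Q2 ↔ Q5)) ∧ ¬¬((P4 ↔ P6) ↔ (Q4 ↔ Q6))) ∨
     (¬((P1 ↔ P3) ↔ (Q1 ↔ Q3)) ∧ ¬¬((P2 ↔ P5) ↔ (Q2 ↔ Q5)) ∧ ¬((P4 ↔ P6) ↔ (Q4 ↔ Q6))) ∨
     (¬¬((P1 ↔ P3) ↔ (Q1 ↔ Q3)) ∧ ¬((P2 ↔ P5) ↔ (Q2 ↔ Q5)) ∧ ¬((P4 ↔ P6) ↔ (Q4 ↔ Q6)))) := by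
  have b := boolcore_aux (decide P1) (decide P2) (decide P3) (decide P4) (decide P5)
    (decide P6) (decide Q1) (decide Q2) (decide Q3) (decide Q4) (decide Q5) (decide Q6)
  simp only [beq_decide_aux, decide_eq_true_eq, not_not] at b ⊢
  exact b h1 h2 h3

/-- in any triple move configuration, every chord other than
the three distinguished chords crosses an even number of them, i.e. exactly `0`
or exactly `2` of the three distinguished chords. -/
theorem tripleMove_even_crossings {n : ℕ} (D D' : ChordDiagram n)
    (a₁ a₂ b₁ b₂ c₁ c₂ : Fin (2 * n))
    (h : TripleMoveAt D D' a₁ a₂ b₁ b₂ c₁ c₂) :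
    ∀ x ∈ D.chords,
      x ≠ s(a₁, b₁) → x ≠ s(a₂, c₁) → x ≠ s(b₂, c₂) →
      ((¬ Crosses x s(a₁, b₁) ∧ ¬ Crosses x s(a₂, c₁) ∧ ¬ Crosses x s(b₂, c₂)) ∨
       (Crosses x s(a₁, b₁) ∧ Crosses x s(a₂, c₁) ∧ ¬ Crosses x s(b₂, c₂)) ∨
       (Crosses x s(a₁, b₁) ∧ ¬ Crosses x s(a₂, c₁) ∧ Crosses x s(b₂, c₂)) ∨
       (¬ Crosses x s(a₁, b₁) ∧ Crosses x s(a₂, c₁) ∧ Crosses x s(b₂, c₂))) := by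
  obtain ⟨hA, hB, hC, hpw, hab, hac, hbc, -⟩ := h
  simp only [List.pairwise_cons, List.mem_cons, List.not_mem_nil, or_false,
    forall_eq_or_imp, forall_eq, List.Pairwise.nil, and_true] at hpw
  obtain ⟨⟨q12, q13, q14, q15, q16⟩, ⟨q23, q24, q25, q26⟩, ⟨q34, q35, q36⟩,
    ⟨q45, q46⟩, q56⟩ := hpw
  intro x hx
  induction x using Sym2.ind with
  | _ u v =>
  intro hx1 hx2 hx3
  have huv : u ≠ v := by
    have := D.not_diag _ hx
    simpa [Sym2.mk_isDiag_iff] using this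
  have mem_ne : ∀ (w : Fin (2 * n)) (ch : Sym2 (Fin (2 * n))), ch ∈ D.chords →
      w ∈ ch → s(u, v) ≠ ch → u ≠ w ∧ v ≠ w := by
    intro w ch hch hw hne
    constructor <;> intro e <;> apply hne
    · exact (D.cover w).unique ⟨hx, e ▸ Sym2.mem_mk_left u v⟩ ⟨hch, hw⟩
    · exact (D.cover w).unique ⟨hx, e ▸ Sym2.mem_mk_right u v⟩ ⟨hch, hw⟩
  obtain ⟨hua1, hva1⟩ := mem_ne a₁ _ hab (Sym2.mem_mk_left _ _) hx1
  obtain ⟨hub1, hvb1⟩ := mem_ne b₁ _ hab (Sym2.mem_mk_right _ _) hx1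
  obtain ⟨hua2, hva2⟩ := mem_ne a₂ _ hac (Sym2.mem_mk_left _ _) hx2
  obtain ⟨huc1, hvc1⟩ := mem_ne c₁ _ hac (Sym2.mem_mk_right _ _) hx2
  obtain ⟨hub2, hvb2⟩ := mem_ne b₂ _ hbc (Sym2.mem_mk_left _ _) hx3
  obtain ⟨huc2, hvc2⟩ := mem_ne c₂ _ hbc (Sym2.mem_mk_right _ _) hx3
  rw [crosses_iff_aux q13 huv hua1 hub1 hva1 hvb1,
    crosses_iff_aux q25 huv hua2 huc1 hva2 hvc1,
    crosses_iff_aux q46 huv hub2 huc2 hvb2 hvc2]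
  have SA := adj_side_aux hA hua1 hua2 hva1 hva2
  have SB := adj_side_aux hB hub1 hub2 hvb1 hvb2
  have SC := adj_side_aux hC huc1 huc2 hvc1 hvc2
  exact propcore_aux _ _ _ _ _ _ _ _ _ _ _ _ SA SB SC
end
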